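/- arXiv:1710.01272 — 2 statements merged into one kernel-verified Lean document; each statement's English description precedes it below -/
import Mathlib

section
/- For x > 0 and κ > 0 with κ ≠ 1, the normalized lower incomplete Gamma function satisfies (1 - e^{-p x})^κ < Γ_l(κ, x)/Γ(κ) < (1 - e^{-p̃ x})^κ, where for 0 < κ < 1 one takes p̃ = (Γ(κ+1))^{-1/κ} and p = 1, and for κ > 1 one takes p̃ = 1 and p = (Γ(κ+1))^{-1/κ}. -/
/-!
Write `φ(x) = Γ_l(κ, x) - Γ(κ) (1 - e^{-qx})^κ` for `q > 0`. Since `φ → 0` both at `0⁺` and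
at `∞`, `φ > 0` on `(0, ∞)` as soon as `φ'` is first positive and then negative. The sign of `φ'`
is that of the logarithm `u` of the ratio of the two densities, and
`u'(x) = (κ - 1) (1/x - q/(e^{qx} - 1)) + q - 1`, where the bracket is positive and strictly
decreasing. For `q = 1` this makes `u` strictly monotone. For `q = Γ(κ+1)^{-1/κ}` the function `u`
tends to `0` at `0⁺` and `u'` is strictly monotone, so `u` is concave or convex and its chord from
the origin controls its sign. In each case `u` (for the lower bound) or `-u` (for the upper bound)
changes sign at most once, from positive to negative.
-/

open Real Filter Set Topology MeasureTheory

noncomputable section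

def PosThenNeg (g : ℝ → ℝ) : Prop :=
  ∀ a b, 0 < a → a < b → g a ≤ 0 → g b < 0

section PosThenNeg

variable {f f' g g' : ℝ → ℝ}

theorem exists_hasDerivAt_eq_slope_of_pos (hg : ∀ x, 0 < x → HasDerivAt g (g' x) x)
    {a b : ℝ} (ha : 0 < a) (hab : a < b) : ∃ c ∈ Ioo a b, g b - g a = g' c * (b - a) := by
  obtain ⟨c, hc, hslope⟩ := exists_hasDerivAt_eq_slope g g' hab
    (fun t ht => (hg t (ha.trans_le ht.1)).continuousAt.continuousWithinAt)
    (fun t ht => hg t (ha.trans ht.1))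
  exact ⟨c, hc, by rw [hslope, div_mul_cancel₀ _ (sub_ne_zero.2 hab.ne')]⟩

theorem PosThenNeg.of_deriv_neg (hg : ∀ x, 0 < x → HasDerivAt g (g' x) x)
    (hg' : ∀ x, 0 < x → g' x < 0) : PosThenNeg g := by
  intro a b ha hab hga
  obtain ⟨c, hc, hslope⟩ := exists_hasDerivAt_eq_slope_of_pos hg ha hab
  nlinarith [hg' c (ha.trans hc.1)]

theorem PosThenNeg.of_sign_eq (hg : PosThenNeg g)
    (hfg : ∀ x, 0 < x → SignType.sign (f x) = SignType.sign (g x)) : PosThenNeg f := by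
  intro a b ha hab hfa
  rw [← sign_nonpos_iff, hfg a ha, sign_nonpos_iff] at hfa
  rw [← not_le, ← sign_nonneg_iff, hfg b (ha.trans hab), sign_nonneg_iff, not_le]
  exact hg a b ha hab hfa

/-- By concavity the tangent at `a` passes above the origin, i.e. `a g'(a) ≤ g(a)`; so `g a ≤ 0`
forces `g' a ≤ 0`, and then `g' < 0` beyond `a`. -/
theorem PosThenNeg.of_strictAntiOn_deriv (h0 : Tendsto g (𝓝[>] 0) (𝓝 0))
    (hg : ∀ x, 0 < x → HasDerivAt g (g' x) x) (hg' : StrictAntiOn g' (Ioi 0)) :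
    PosThenNeg g := by
  intro a b ha hab hga
  have htangent : a * g' a ≤ g a := by
    have hlim : Tendsto (fun ε => g a - g' a * (a - ε)) (𝓝[>] 0)
        (𝓝 (g a - g' a * (a - 0))) :=
      ((continuous_const.sub (continuous_const.mul (continuous_const.sub continuous_id))).tendsto
        0).mono_left nhdsWithin_le_nhds
    have hle : 0 ≤ g a - g' a * (a - 0) := le_of_tendsto_of_tendsto h0 hlim <| by
      filter_upwards [Ioo_mem_nhdsGT ha] with ε hε
      obtain ⟨c, hc, hslope⟩ := exists_hasDerivAt_eq_slope_of_pos hg hε.1 hε.2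
      nlinarith [hg' (hε.1.trans hc.1) ha hc.2, hε.2]
    linarith
  obtain ⟨d, hd, hslope⟩ := exists_hasDerivAt_eq_slope_of_pos hg ha hab
  have hd' : g' d < g' a := hg' ha (ha.trans hd.1) hd.1
  have hga' : g' a ≤ 0 := by nlinarith
  nlinarith

theorem PosThenNeg.pos_of_hasDerivAt (hf' : PosThenNeg f') (h0 : Tendsto f (𝓝[>] 0) (𝓝 0))
    (htop : Tendsto f atTop (𝓝 0)) (hf : ∀ x, 0 < x → HasDerivAt f (f' x) x)
    {z : ℝ} (hz : 0 < z) : 0 < f z := by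
  by_cases hpos : ∀ w ∈ Ioc 0 z, 0 < f' w
  · have hlt : ∀ s t, 0 < s → s < t → t ≤ z → f s < f t := by
      intro s t hs hst htz
      obtain ⟨c, hc, hslope⟩ := exists_hasDerivAt_eq_slope_of_pos hf hs hst
      nlinarith [hpos c ⟨hs.trans hc.1, hc.2.le.trans htz⟩]
    have hle : 0 ≤ f (z / 2) := le_of_tendsto h0 <| by
      filter_upwards [Ioo_mem_nhdsGT (half_pos hz)] with ε hε
      exact (hlt ε (z / 2) hε.1 hε.2 (half_le_self hz.le)).le
    linarith [hlt (z / 2) z (half_pos hz) (half_lt_self hz) le_rfl]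
  · push Not at hpos
    obtain ⟨w, hw, hw'⟩ := hpos
    have hlt : ∀ s t, z ≤ s → s < t → f t < f s := by
      intro s t hs hst
      obtain ⟨c, hc, hslope⟩ := exists_hasDerivAt_eq_slope_of_pos hf (hz.trans_le hs) hst
      nlinarith [hf' w c hw.1 (hw.2.trans_lt (hs.trans_lt hc.1)) hw']
    have hle : 0 ≤ f (z + 1) := le_of_tendsto htop <| by
      filter_upwards [eventually_gt_atTop (z + 1)] with y hy
      exact (hlt (z + 1) y (by linarith) hy).le
    linarith [hlt z (z + 1) le_rfl (lt_add_one z)]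

end PosThenNeg

def lowerIncGamma (κ x : ℝ) : ℝ := ∫ t in (0 : ℝ)..x, t ^ (κ - 1) * exp (-t)

section LowerIncGamma

variable {κ : ℝ}

theorem integrableOn_rpow_mul_exp_neg_Ioi (hκ : 0 < κ) :
    IntegrableOn (fun t : ℝ => t ^ (κ - 1) * exp (-t)) (Ioi 0) := by
  simpa only [mul_comm] using GammaIntegral_convergent hκ

theorem integrableOn_rpow_mul_exp_neg_Icc (hκ : 0 < κ) (x : ℝ) :
    IntegrableOn (fun t : ℝ => t ^ (κ - 1) * exp (-t)) (Icc 0 x) := by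
  rw [integrableOn_Icc_iff_integrableOn_Ioc]
  exact (integrableOn_rpow_mul_exp_neg_Ioi hκ).mono_set Ioc_subset_Ioi_self

theorem tendsto_lowerIncGamma_nhdsGT_zero (hκ : 0 < κ) :
    Tendsto (lowerIncGamma κ) (𝓝[>] 0) (𝓝 0) := by
  have hcont : ContinuousOn (lowerIncGamma κ) (Icc 0 1) := by
    have := intervalIntegral.continuousOn_primitive_interval (a := 0) (b := 1)
      (f := fun t : ℝ => t ^ (κ - 1) * exp (-t)) (μ := volume)
    rw [uIcc_of_le zero_le_one] at this
    exact this (integrableOn_rpow_mul_exp_neg_Icc hκ 1)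
  simpa [ContinuousWithinAt, lowerIncGamma] using
    (hcont 0 ⟨le_rfl, zero_le_one⟩).mono_of_mem_nhdsWithin (Icc_mem_nhdsGT one_pos)

theorem tendsto_lowerIncGamma_atTop (hκ : 0 < κ) :
    Tendsto (lowerIncGamma κ) atTop (𝓝 (Gamma κ)) := by
  rw [Gamma_eq_integral hκ]
  simp only [mul_comm (exp _)]
  exact intervalIntegral_tendsto_integral_Ioi 0 (integrableOn_rpow_mul_exp_neg_Ioi hκ) tendsto_id

theorem hasDerivAt_lowerIncGamma (hκ : 0 < κ) {x : ℝ} (hx : 0 < x) :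
    HasDerivAt (lowerIncGamma κ) (x ^ (κ - 1) * exp (-x)) x := by
  have hcont : ∀ t : ℝ, 0 < t → ContinuousAt (fun t : ℝ => t ^ (κ - 1) * exp (-t)) t :=
    fun t ht => (continuousAt_rpow_const t (κ - 1) (Or.inl ht.ne')).mul
      (continuous_exp.comp continuous_neg).continuousAt
  refine intervalIntegral.integral_hasDerivAt_right ?_ ?_ (hcont x hx)
  · rw [intervalIntegrable_iff_integrableOn_Icc_of_le hx.le]
    exact integrableOn_rpow_mul_exp_neg_Icc hκ x
  · exact ContinuousOn.stronglyMeasurableAtFilter isOpen_Ioi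
      (fun t ht => (hcont t ht).continuousWithinAt) x hx

end LowerIncGamma

theorem sq_mul_exp_lt_sq_exp_sub_one {s : ℝ} (hs : 0 < s) : s ^ 2 * exp s < (exp s - 1) ^ 2 := by
  have hsinh : s / 2 < sinh (s / 2) := self_lt_sinh_iff.2 (half_pos hs)
  have hsq : exp s = exp (s / 2) ^ 2 := by rw [← exp_nat_mul]; ring_nf
  have hsub : exp s - 1 = 2 * sinh (s / 2) * exp (s / 2) := by
    rw [sinh_eq, hsq, exp_neg]
    field_simp
  rw [hsub, hsq]
  have hpos := exp_pos (s / 2)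
  nlinarith [mul_pos (mul_pos hpos hpos)
    (mul_pos (sub_pos.2 hsinh) (by linarith : 0 < sinh (s / 2) + s / 2))]

section ExpSlope

variable {q x : ℝ}

theorem one_sub_exp_neg_mul_pos (hq : 0 < q) (hx : 0 < x) : 0 < 1 - exp (-(q * x)) := by
  have : exp (-(q * x)) < 1 := exp_lt_one_iff.2 (by nlinarith)
  linarith

theorem one_lt_exp_mul (hq : 0 < q) (hx : 0 < x) : 1 < exp (q * x) :=
  one_lt_exp_iff.2 (mul_pos hq hx)

theorem one_div_sub_div_exp_sub_one_pos (hq : 0 < q) (hx : 0 < x) :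
    0 < 1 / x - q / (exp (q * x) - 1) := by
  have h := add_one_lt_exp (mul_pos hq hx).ne'
  rw [sub_pos, div_lt_div_iff₀ (by linarith [mul_pos hq hx]) hx]
  linarith

theorem hasDerivAt_one_div_sub_div_exp_sub_one (hq : 0 < q) (hx : 0 < x) :
    HasDerivAt (fun y => 1 / y - q / (exp (q * y) - 1))
      (q ^ 2 * exp (q * x) / (exp (q * x) - 1) ^ 2 - 1 / x ^ 2) x := by
  have hE := one_lt_exp_mul hq hx
  have hden : HasDerivAt (fun y => exp (q * y) - 1) (exp (q * x) * q) x := by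
    simpa using (((hasDerivAt_id x).const_mul q).exp).sub_const 1
  refine (((hasDerivAt_const x 1).div (hasDerivAt_id x) hx.ne').sub
    ((hasDerivAt_const x q).div hden (by linarith))).congr_deriv ?_
  simp only [id]
  field_simp
  ring

theorem strictAntiOn_one_div_sub_div_exp_sub_one (hq : 0 < q) :
    StrictAntiOn (fun y => 1 / y - q / (exp (q * y) - 1)) (Ioi 0) := by
  refine strictAntiOn_of_hasDerivWithinAt_neg (convex_Ioi 0)
    (f' := fun y => q ^ 2 * exp (q * y) / (exp (q * y) - 1) ^ 2 - 1 / y ^ 2)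
    (fun y hy => (hasDerivAt_one_div_sub_div_exp_sub_one hq hy).continuousAt.continuousWithinAt)
    (fun y hy => ?_) (fun y hy => ?_) <;> rw [interior_Ioi] at hy
  · exact (hasDerivAt_one_div_sub_div_exp_sub_one hq hy).hasDerivWithinAt
  · have hE := one_lt_exp_mul hq hy
    have h := sq_mul_exp_lt_sq_exp_sub_one (mul_pos hq hy)
    rw [sub_neg, div_lt_div_iff₀ (pow_pos (by linarith) 2) (pow_pos hy 2)]
    linarith [show q ^ 2 * exp (q * y) * y ^ 2 = (q * y) ^ 2 * exp (q * y) by ring]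

end ExpSlope

theorem sign_sub_eq_sign_log_sub {a b : ℝ} (ha : 0 < a) (hb : 0 < b) :
    SignType.sign (a - b) = SignType.sign (log a - log b) := by
  rcases lt_trichotomy a b with h | rfl | h
  · rw [sign_neg (sub_neg.2 h), sign_neg (sub_neg.2 (log_lt_log ha h))]
  · simp
  · rw [sign_pos (sub_pos.2 h), sign_pos (sub_pos.2 (log_lt_log hb h))]

def incGammaGap (κ q x : ℝ) : ℝ := lowerIncGamma κ x - Gamma κ * (1 - exp (-(q * x))) ^ κ

def incGammaGapDeriv (κ q x : ℝ) : ℝ :=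
  x ^ (κ - 1) * exp (-x) - Gamma (κ + 1) * (q * exp (-(q * x)) * (1 - exp (-(q * x))) ^ (κ - 1))

def logDensityRatio (κ q x : ℝ) : ℝ :=
  (κ - 1) * (log x - log (1 - exp (-(q * x)))) + (q - 1) * x - log (Gamma (κ + 1) * q)

section IncGammaGap

variable {κ q x : ℝ}

theorem hasDerivAt_one_sub_exp_neg_mul (q x : ℝ) :
    HasDerivAt (fun y => 1 - exp (-(q * y))) (q * exp (-(q * x))) x := by
  simpa [mul_comm] using (((hasDerivAt_id x).const_mul q).neg.exp).const_sub 1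

theorem tendsto_incGammaGap_nhdsGT_zero (hκ : 0 < κ) :
    Tendsto (incGammaGap κ q) (𝓝[>] 0) (𝓝 0) := by
  have hpow : Tendsto (fun y => (1 - exp (-(q * y))) ^ κ) (𝓝[>] 0) (𝓝 0) := by
    have := ((hasDerivAt_one_sub_exp_neg_mul q 0).continuousAt.rpow_const
      (Or.inr hκ.le)).tendsto.mono_left (nhdsWithin_le_nhds (s := Ioi 0))
    simpa [zero_rpow hκ.ne'] using this
  have h := (tendsto_lowerIncGamma_nhdsGT_zero hκ).sub (hpow.const_mul (Gamma κ))
  rwa [mul_zero, sub_zero] at h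

theorem tendsto_incGammaGap_atTop (hκ : 0 < κ) (hq : 0 < q) :
    Tendsto (incGammaGap κ q) atTop (𝓝 0) := by
  have hexp : Tendsto (fun y => exp (-(q * y))) atTop (𝓝 0) :=
    tendsto_exp_atBot.comp (tendsto_neg_atTop_atBot.comp (tendsto_id.const_mul_atTop hq))
  have hpow : Tendsto (fun y => (1 - exp (-(q * y))) ^ κ) atTop (𝓝 1) := by
    have hsub : Tendsto (fun y => 1 - exp (-(q * y))) atTop (𝓝 1) := by
      simpa using tendsto_const_nhds.sub hexp
    simpa using hsub.rpow_const (Or.inl one_ne_zero)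
  have h := (tendsto_lowerIncGamma_atTop hκ).sub (hpow.const_mul (Gamma κ))
  rwa [mul_one, sub_self] at h

theorem hasDerivAt_incGammaGap (hκ : 0 < κ) (hq : 0 < q) (hx : 0 < x) :
    HasDerivAt (incGammaGap κ q) (incGammaGapDeriv κ q x) x := by
  have hpow := (hasDerivAt_one_sub_exp_neg_mul q x).rpow_const (p := κ)
    (Or.inl (one_sub_exp_neg_mul_pos hq hx).ne')
  refine ((hasDerivAt_lowerIncGamma hκ hx).sub (hpow.const_mul (Gamma κ))).congr_deriv ?_
  rw [incGammaGapDeriv, Gamma_add_one hκ.ne']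
  ring

theorem logDensityRatio_eq_log_sub_log (hκ : 0 < κ) (hq : 0 < q) (hx : 0 < x) :
    logDensityRatio κ q x = log (x ^ (κ - 1) * exp (-x))
      - log (Gamma (κ + 1) * (q * exp (-(q * x)) * (1 - exp (-(q * x))) ^ (κ - 1))) := by
  have hv := one_sub_exp_neg_mul_pos hq hx
  have hΓ : 0 < Gamma (κ + 1) := Gamma_pos_of_pos (by linarith)
  rw [log_mul (by positivity) (exp_ne_zero _), log_rpow hx, log_exp,
    log_mul hΓ.ne' (by positivity), log_mul (by positivity) (by positivity),
    log_mul hq.ne' (exp_ne_zero _), log_exp, log_rpow hv, logDensityRatio,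
    log_mul hΓ.ne' hq.ne']
  ring

theorem sign_incGammaGapDeriv (hκ : 0 < κ) (hq : 0 < q) (hx : 0 < x) :
    SignType.sign (incGammaGapDeriv κ q x) = SignType.sign (logDensityRatio κ q x) := by
  have hv := one_sub_exp_neg_mul_pos hq hx
  have hΓ : 0 < Gamma (κ + 1) := Gamma_pos_of_pos (by linarith)
  rw [logDensityRatio_eq_log_sub_log hκ hq hx, incGammaGapDeriv]
  exact sign_sub_eq_sign_log_sub (by positivity) (by positivity)

theorem hasDerivAt_logDensityRatio (hq : 0 < q) (hx : 0 < x) :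
    HasDerivAt (logDensityRatio κ q)
      ((κ - 1) * (1 / x - q / (exp (q * x) - 1)) + (q - 1)) x := by
  have hv := one_sub_exp_neg_mul_pos hq hx
  have hE := one_lt_exp_mul hq hx
  have hlog := (hasDerivAt_one_sub_exp_neg_mul q x).log hv.ne'
  refine ((((hasDerivAt_log hx.ne').sub hlog).const_mul (κ - 1)).add
    ((hasDerivAt_id x).const_mul (q - 1))).sub_const _ |>.congr_deriv ?_
  rw [exp_neg]
  field_simp

theorem tendsto_logDensityRatio_nhdsGT_zero (hκ : 0 < κ) (hq : 0 < q)
    (hcrit : Gamma (κ + 1) * q ^ κ = 1) :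
    Tendsto (logDensityRatio κ q) (𝓝[>] 0) (𝓝 0) := by
  have hΓ : 0 < Gamma (κ + 1) := Gamma_pos_of_pos (by linarith)
  have hslope : Tendsto (fun y => (1 - exp (-(q * y))) / y) (𝓝[>] 0) (𝓝 q) := by
    have := (hasDerivAt_iff_tendsto_slope.1 (hasDerivAt_one_sub_exp_neg_mul q 0)).mono_left
      (nhdsWithin_mono 0 fun y (hy : y ∈ Ioi 0) => (ne_of_gt hy : y ≠ 0))
    rw [mul_zero, neg_zero, exp_zero, mul_one] at this
    exact this.congr fun y => by simp [slope_def_field]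
  have hlim := ((((continuousAt_log hq.ne').tendsto.comp hslope).const_mul (-(κ - 1))).add
    ((tendsto_id.mono_left nhdsWithin_le_nhds).const_mul (q - 1))).sub_const
    (log (Gamma (κ + 1) * q))
  have hzero : -(κ - 1) * log q + (q - 1) * 0 - log (Gamma (κ + 1) * q) = 0 := by
    have := congrArg log hcrit
    rw [log_mul hΓ.ne' (rpow_pos_of_pos hq κ).ne', log_rpow hq, log_one] at this
    rw [log_mul hΓ.ne' hq.ne']
    linarith
  rw [hzero] at hlim
  refine hlim.congr' (eventually_nhdsWithin_of_forall fun y (hy : 0 < y) => ?_)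
  simp only [Function.comp_apply, id]
  rw [log_div (one_sub_exp_neg_mul_pos hq hy).ne' hy.ne', logDensityRatio]
  ring

end IncGammaGap

section SignChange

variable {κ q : ℝ}

theorem posThenNeg_logDensityRatio_one (hκ : κ < 1) : PosThenNeg (logDensityRatio κ 1) :=
  .of_deriv_neg (fun _ hx => hasDerivAt_logDensityRatio one_pos hx) fun x hx => by
    nlinarith [one_div_sub_div_exp_sub_one_pos one_pos hx]

theorem posThenNeg_neg_logDensityRatio_one (hκ : 1 < κ) :
    PosThenNeg (fun x => -logDensityRatio κ 1 x) :=
  .of_deriv_neg (fun _ hx => (hasDerivAt_logDensityRatio one_pos hx).neg) fun x hx => by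
    nlinarith [one_div_sub_div_exp_sub_one_pos one_pos hx]

theorem posThenNeg_logDensityRatio_of_crit (hκ : 1 < κ) (hq : 0 < q)
    (hcrit : Gamma (κ + 1) * q ^ κ = 1) : PosThenNeg (logDensityRatio κ q) :=
  .of_strictAntiOn_deriv (tendsto_logDensityRatio_nhdsGT_zero (by linarith) hq hcrit)
    (fun _ hx => hasDerivAt_logDensityRatio hq hx) fun a ha b hb hab => by
      nlinarith [strictAntiOn_one_div_sub_div_exp_sub_one hq ha hb hab]

theorem posThenNeg_neg_logDensityRatio_of_crit (hκ₀ : 0 < κ) (hκ : κ < 1) (hq : 0 < q)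
    (hcrit : Gamma (κ + 1) * q ^ κ = 1) : PosThenNeg (fun x => -logDensityRatio κ q x) :=
  .of_strictAntiOn_deriv
    (by simpa only [neg_zero] using (tendsto_logDensityRatio_nhdsGT_zero hκ₀ hq hcrit).neg)
    (fun _ hx => (hasDerivAt_logDensityRatio hq hx).neg) fun a ha b hb hab => by
      nlinarith [strictAntiOn_one_div_sub_div_exp_sub_one hq ha hb hab]

end SignChange

section Bounds

variable {κ q x : ℝ}

theorem one_sub_exp_rpow_lt_lowerIncGamma_div (hκ : 0 < κ) (hq : 0 < q) (hx : 0 < x)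
    (hu : PosThenNeg (logDensityRatio κ q)) :
    (1 - exp (-(q * x))) ^ κ < lowerIncGamma κ x / Gamma κ := by
  have hgap : 0 < incGammaGap κ q x :=
    (hu.of_sign_eq fun _ hy => sign_incGammaGapDeriv hκ hq hy).pos_of_hasDerivAt
      (tendsto_incGammaGap_nhdsGT_zero hκ) (tendsto_incGammaGap_atTop hκ hq)
      (fun _ hy => hasDerivAt_incGammaGap hκ hq hy) hx
  rw [incGammaGap] at hgap
  rw [lt_div_iff₀ (Gamma_pos_of_pos hκ)]
  linarith

theorem lowerIncGamma_div_lt_one_sub_exp_rpow (hκ : 0 < κ) (hq : 0 < q) (hx : 0 < x)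
    (hu : PosThenNeg (fun x => -logDensityRatio κ q x)) :
    lowerIncGamma κ x / Gamma κ < (1 - exp (-(q * x))) ^ κ := by
  have hgap : 0 < -incGammaGap κ q x :=
    (hu.of_sign_eq (f := fun y => -incGammaGapDeriv κ q y) fun _ hy => by
        simp only [Left.sign_neg, sign_incGammaGapDeriv hκ hq hy]).pos_of_hasDerivAt
      (f := fun y => -incGammaGap κ q y)
      (by simpa only [neg_zero] using (tendsto_incGammaGap_nhdsGT_zero hκ).neg)
      (by simpa only [neg_zero] using (tendsto_incGammaGap_atTop hκ hq).neg)
      (fun _ hy => (hasDerivAt_incGammaGap hκ hq hy).neg) hx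
  rw [incGammaGap] at hgap
  rw [div_lt_iff₀ (Gamma_pos_of_pos hκ)]
  linarith

end Bounds

/-- Alzer's inequality bounding the normalized lower incomplete Gamma function. -/
theorem alzer_inequality (κ x p ptilde : ℝ) (hx : 0 < x) (hκ : 0 < κ) (hκ1 : κ ≠ 1)
    (hp : p = if κ < 1 then 1 else (Real.Gamma (κ + 1)) ^ (-(1 : ℝ) / κ))
    (hpt : ptilde = if κ < 1 then (Real.Gamma (κ + 1)) ^ (-(1 : ℝ) / κ) else 1) :
    (1 - Real.exp (-(p * x))) ^ κ
      < (∫ t in (0 : ℝ)..x, t ^ (κ - 1) * Real.exp (-t)) / Real.Gamma κ ∧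
    (∫ t in (0 : ℝ)..x, t ^ (κ - 1) * Real.exp (-t)) / Real.Gamma κ
      < (1 - Real.exp (-(ptilde * x))) ^ κ := by
  have hΓ : 0 < Gamma (κ + 1) := Gamma_pos_of_pos (by linarith)
  set Q := Gamma (κ + 1) ^ (-(1 : ℝ) / κ)
  have hQ : 0 < Q := rpow_pos_of_pos hΓ _
  have hcrit : Gamma (κ + 1) * Q ^ κ = 1 := by
    rw [← rpow_mul hΓ.le, div_mul_cancel₀ _ hκ.ne', rpow_neg_one, mul_inv_cancel₀ hΓ.ne']
  change (1 - exp (-(p * x))) ^ κ < lowerIncGamma κ x / Gamma κ ∧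
    lowerIncGamma κ x / Gamma κ < (1 - exp (-(ptilde * x))) ^ κ
  rcases hκ1.lt_or_gt with hlt | hgt
  · simp only [if_pos hlt] at hp hpt
    subst hp hpt
    exact ⟨one_sub_exp_rpow_lt_lowerIncGamma_div hκ one_pos hx
        (posThenNeg_logDensityRatio_one hlt),
      lowerIncGamma_div_lt_one_sub_exp_rpow hκ hQ hx
        (posThenNeg_neg_logDensityRatio_of_crit hκ hlt hQ hcrit)⟩
  · simp only [if_neg hgt.not_gt] at hp hpt
    subst hp hpt
    exact ⟨one_sub_exp_rpow_lt_lowerIncGamma_div hκ hQ hx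
        (posThenNeg_logDensityRatio_of_crit hgt hQ hcrit),
      lowerIncGamma_div_lt_one_sub_exp_rpow hκ one_pos hx
        (posThenNeg_neg_logDensityRatio_one hgt)⟩
end
end

section
/- Let X and Y be nonnegative random variables (possibly dependent). Then E[ln(1 + X/(1 + Y))] = ∫_0^∞ (E[e^{-sY}] − E[e^{-s(X+Y)}]) · e^{-s}/s ds. -/
/-!
For fixed `x, y ≥ 0`, Frullani's integral for `t ↦ exp (-t)` at the rates `1 + y` and
`1 + x + y` gives `log (1 + x / (1 + y)) = ∫₀^∞ (exp (-s y) - exp (-s (x + y))) exp (-s) / s ds`.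
This integrand is nonnegative, so the integrability of the left-hand side at `(X, Y)` makes it
jointly integrable, and Fubini exchanges the expectation with the `ds` integral.
-/

open Real MeasureTheory ProbabilityTheory Set

lemma exp_neg_mul_sub_exp_neg_mul_le (c d s : ℝ) :
    exp (-(c * s)) - exp (-(d * s)) ≤ (d - c) * s * exp (-(c * s)) := by
  have h := add_one_le_exp (-((d - c) * s))
  have hsplit : exp (-(d * s)) = exp (-(c * s)) * exp (-((d - c) * s)) := by
    rw [← exp_add]; ring_nf
  rw [hsplit]
  nlinarith [exp_pos (-(c * s))]

lemma integrableOn_exp_neg_mul_sub_exp_neg_mul_div {c d : ℝ} (hc : 0 < c) (hd : 0 < d) :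
    IntegrableOn (fun s => (exp (-(c * s)) - exp (-(d * s))) / s) (Ioi 0) := by
  wlog hcd : c ≤ d generalizing c d
  · convert (this hd hc (le_of_not_ge hcd)).neg using 2 with s
    rw [Pi.neg_apply, ← neg_div, neg_sub]
  have hmeas : Measurable fun s : ℝ => (exp (-(c * s)) - exp (-(d * s))) / s := by fun_prop
  refine Integrable.mono' ((exp_neg_integrableOn_Ioi 0 hc).const_mul (d - c))
    hmeas.aestronglyMeasurable ?_
  refine ae_restrict_of_forall_mem measurableSet_Ioi fun s (hs : 0 < s) => ?_
  have hmono : exp (-(d * s)) ≤ exp (-(c * s)) := exp_le_exp.mpr (by nlinarith)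
  rw [norm_div, Real.norm_of_nonneg (sub_nonneg.mpr hmono), Real.norm_of_nonneg hs.le,
    div_le_iff₀ hs]
  have := exp_neg_mul_sub_exp_neg_mul_le c d s
  simp only [neg_mul] at this ⊢
  linarith

lemma integral_exp_neg_mul_sub_exp_neg_mul_div {c d : ℝ} (hc : 0 < c) (hd : 0 < d) :
    ∫ s in Ioi 0, (exp (-(c * s)) - exp (-(d * s))) / s = log (d / c) := by
  have hcont : Continuous fun x : ℝ => exp (-x) := by fun_prop
  have h := Frullani.integral_Ioi_eq (L := 1) (R := 0)
    (hcont.locallyIntegrable.locallyIntegrableOn _) hc hd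
    (by simpa using hcont.continuousWithinAt (x := 0) |>.tendsto)
    tendsto_exp_neg_atTop_nhds_zero
    (by simpa only [smul_eq_mul, inv_mul_eq_div] using
      integrableOn_exp_neg_mul_sub_exp_neg_mul_div hc hd)
  simpa only [smul_eq_mul, inv_mul_eq_div, sub_zero, mul_one] using h

noncomputable def hamdiIntegrand (x y s : ℝ) : ℝ :=
  (exp (-(s * y)) - exp (-(s * (x + y)))) * exp (-s) / s

lemma hamdiIntegrand_eq (x y s : ℝ) :
    hamdiIntegrand x y s = (exp (-((1 + y) * s)) - exp (-((1 + (x + y)) * s))) / s := by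
  rw [hamdiIntegrand, sub_mul, ← exp_add, ← exp_add]
  ring_nf

lemma hamdiIntegrand_nonneg {x s : ℝ} (y : ℝ) (hx : 0 ≤ x) (hs : 0 ≤ s) :
    0 ≤ hamdiIntegrand x y s := by
  have : exp (-(s * (x + y))) ≤ exp (-(s * y)) := exp_le_exp.mpr (by nlinarith)
  unfold hamdiIntegrand
  have := exp_pos (-s)
  positivity

lemma integrableOn_hamdiIntegrand {x y : ℝ} (hy : -1 < y) (hxy : -1 < x + y) :
    IntegrableOn (hamdiIntegrand x y) (Ioi 0) := by
  simp_rw [funext (hamdiIntegrand_eq x y)]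
  exact integrableOn_exp_neg_mul_sub_exp_neg_mul_div (by linarith) (by linarith)

lemma integral_hamdiIntegrand {x y : ℝ} (hy : -1 < y) (hxy : -1 < x + y) :
    ∫ s in Ioi 0, hamdiIntegrand x y s = log (1 + x / (1 + y)) := by
  simp_rw [hamdiIntegrand_eq, integral_exp_neg_mul_sub_exp_neg_mul_div
    (by linarith : 0 < 1 + y) (by linarith : 0 < 1 + (x + y))]
  have hy1 : 1 + y ≠ 0 := by linarith
  congr 1
  field_simp
  ring

section

variable {Ω : Type*} [MeasurableSpace Ω] {μ : Measure Ω} {X Y : Ω → ℝ}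

lemma integrable_exp_neg_mul_of_nonneg [IsFiniteMeasure μ] (hY : AEMeasurable Y μ)
    (hY0 : ∀ᵐ ω ∂μ, 0 ≤ Y ω) {s : ℝ} (hs : 0 ≤ s) :
    Integrable (fun ω => exp (-(s * Y ω))) μ := by
  refine Integrable.of_bound (by fun_prop) 1 ?_
  filter_upwards [hY0] with ω hω
  rw [Real.norm_of_nonneg (exp_pos _).le, exp_le_one_iff]
  nlinarith

lemma integral_hamdiIntegrand_comp [IsFiniteMeasure μ] (hX : Measurable X) (hY : Measurable Y)
    (hX0 : ∀ ω, 0 ≤ X ω) (hY0 : ∀ ω, 0 ≤ Y ω) {s : ℝ} (hs : 0 ≤ s) :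
    ∫ ω, hamdiIntegrand (X ω) (Y ω) s ∂μ
      = ((∫ ω, exp (-(s * Y ω)) ∂μ) - ∫ ω, exp (-(s * (X ω + Y ω))) ∂μ) * exp (-s) / s := by
  have hXY0 : ∀ ω, 0 ≤ X ω + Y ω := fun ω => add_nonneg (hX0 ω) (hY0 ω)
  simp only [hamdiIntegrand]
  rw [integral_div, integral_mul_const,
    integral_sub (integrable_exp_neg_mul_of_nonneg hY.aemeasurable (ae_of_all _ hY0) hs)
      (integrable_exp_neg_mul_of_nonneg (by fun_prop) (ae_of_all _ hXY0) hs)]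

lemma integrable_hamdiIntegrand_prod (hX : Measurable X) (hY : Measurable Y)
    (hX0 : ∀ ω, 0 ≤ X ω) (hY0 : ∀ ω, 0 ≤ Y ω)
    (hint : Integrable (fun ω => log (1 + X ω / (1 + Y ω))) μ) :
    Integrable (Function.uncurry fun ω s => hamdiIntegrand (X ω) (Y ω) s)
      (μ.prod (volume.restrict (Ioi 0))) := by
  have hy (ω) : -1 < Y ω := by linarith [hY0 ω]
  have hxy (ω) : -1 < X ω + Y ω := by linarith [hX0 ω, hY0 ω]
  have hmeas : Measurable (Function.uncurry fun ω s => hamdiIntegrand (X ω) (Y ω) s) := by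
    unfold hamdiIntegrand Function.uncurry
    fun_prop
  have hnorm (ω : Ω) : ∫ s in Ioi 0, ‖hamdiIntegrand (X ω) (Y ω) s‖
      = log (1 + X ω / (1 + Y ω)) := by
    rw [← integral_hamdiIntegrand (hy ω) (hxy ω)]
    refine setIntegral_congr_fun measurableSet_Ioi fun s (hs : 0 < s) => ?_
    exact Real.norm_of_nonneg (hamdiIntegrand_nonneg _ (hX0 ω) hs.le)
  refine (integrable_prod_iff hmeas.aestronglyMeasurable).mpr ⟨?_, ?_⟩
  · refine ae_of_all _ fun ω => ?_
    simp only [Function.uncurry_apply_pair]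
    exact integrableOn_hamdiIntegrand (hy ω) (hxy ω)
  · simpa only [Function.uncurry_apply_pair, hnorm] using hint

end

theorem hamdi_lemma_general {Ω : Type*} [MeasureSpace Ω] [IsProbabilityMeasure (ℙ : Measure Ω)]
    (X Y : Ω → ℝ) (hX : Measurable X) (hY : Measurable Y)
    (hXnn : ∀ ω, 0 ≤ X ω) (hYnn : ∀ ω, 0 ≤ Y ω)
    (hint : Integrable (fun ω => Real.log (1 + X ω / (1 + Y ω)))) :
    ∫ ω, Real.log (1 + X ω / (1 + Y ω))
      = ∫ s in Set.Ioi (0 : ℝ),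
          ((∫ ω, Real.exp (-(s * Y ω))) - ∫ ω, Real.exp (-(s * (X ω + Y ω))))
            * Real.exp (-s) / s := by
  calc ∫ ω, log (1 + X ω / (1 + Y ω))
      = ∫ ω, ∫ s in Ioi 0, hamdiIntegrand (X ω) (Y ω) s := by
        refine integral_congr_ae (ae_of_all _ fun ω => (integral_hamdiIntegrand ?_ ?_).symm) <;>
          linarith [hXnn ω, hYnn ω]
    _ = ∫ s in Ioi 0, ∫ ω, hamdiIntegrand (X ω) (Y ω) s :=
        integral_integral_swap (integrable_hamdiIntegrand_prod hX hY hXnn hYnn hint)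
    _ = _ := setIntegral_congr_fun measurableSet_Ioi fun s (hs : 0 < s) =>
        integral_hamdiIntegrand_comp hX hY hXnn hYnn hs.le

/-- Hamdi's lemma: for nonnegative random variables X (signal) and Y (interference),
E[ln(1 + X/(1+Y))] = ∫_0^∞ (E[e^{-sY}] − E[e^{-s(X+Y)}]) e^{-s}/s ds. -/
theorem hamdi_lemma {Ω : Type*} [MeasureSpace Ω] [IsProbabilityMeasure (ℙ : Measure Ω)]
    (X Y : Ω → ℝ) (hX : Measurable X) (hY : Measurable Y)
    (hXnn : ∀ ω, 0 ≤ X ω) (hYnn : ∀ ω, 0 ≤ Y ω)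
    (hint : Integrable (fun ω => Real.log (1 + X ω / (1 + Y ω))))
    (hLY : ∀ s > (0 : ℝ), Integrable (fun ω => Real.exp (-(s * Y ω))))
    (hLXY : ∀ s > (0 : ℝ), Integrable (fun ω => Real.exp (-(s * (X ω + Y ω))))) :
    ∫ ω, Real.log (1 + X ω / (1 + Y ω))
      = ∫ s in Set.Ioi (0 : ℝ),
          ((∫ ω, Real.exp (-(s * Y ω))) - ∫ ω, Real.exp (-(s * (X ω + Y ω))))
            * Real.exp (-s) / s :=
  hamdi_lemma_general X Y hX hY hXnn hYnn hint
end
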